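/- arXiv:1812.07414 — 4 statements merged into one kernel-verified Lean document; each statement's English description precedes it below -/
import Mathlib

section
/- Let G be a DAG on finite vertex set V with parent sets Ca(·) (interpreted as direct causes), and let i, j ∈ V be such that i is not an ancestor of j and j is not a parent of i and i is not a parent of j. Then Ca(i) ∪ Ca(j) d-separates {i} from {j} in G. -/
/-!
Walk along the path from `i` until the first edge that points backwards. If there is none,
the path is directed and `i` is an ancestor of `j`. If it is the first edge, its tail is a
parent of `i`, lies in `Ca i`, is not `j` (as `j ∉ Ca i`) and is no collider, since an edge back
into it would make a 2-cycle. Otherwise its head is a collider and a proper descendant of `i`;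
neither it nor any of its descendants lies in `Ca i ∪ Ca j`, as that would close a cycle
through `i` or make `i` an ancestor of `j`.
-/

/-- The path `l` has a collider at position `t+1`: both neighboring edges point into it. -/
def ColliderAt {V : Type*} (E : V → V → Prop) (l : List V) (t : ℕ) : Prop :=
  ∃ a w b, l[t]? = some a ∧ l[t+1]? = some w ∧ l[t+2]? = some b ∧ E a w ∧ E b w

/-- The undirected path `l` is blocked by the set `K`: some interior non-collider
vertex lies in `K`, or some collider `w` is such that neither `w` nor any descendant
of `w` lies in `K`. -/
def Blocked {V : Type*} (E : V → V → Prop) (K : Set V) (l : List V) : Prop :=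
  (∃ t w, l[t+1]? = some w ∧ t + 2 < l.length ∧ ¬ ColliderAt E l t ∧ w ∈ K) ∨
  (∃ t w, l[t+1]? = some w ∧ ColliderAt E l t ∧ w ∉ K ∧
    ∀ d, Relation.TransGen E w d → d ∉ K)

/-- `l` is an undirected path from `u` to `v`: a list of distinct vertices starting at
`u`, ending at `v`, with consecutive vertices joined by an edge in either direction. -/
def IsUPath {V : Type*} (E : V → V → Prop) (u v : V) (l : List V) : Prop :=
  l.Nodup ∧ l.head? = some u ∧ l.getLast? = some v ∧
    l.Chain' (fun a b => E a b ∨ E b a)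

/-- `K` d-separates `I` from `J`: every undirected path between a vertex of `I` and a
vertex of `J` is blocked by `K`. -/
def DSep {V : Type*} (E : V → V → Prop) (I J K : Set V) : Prop :=
  ∀ u ∈ I, ∀ v ∈ J, ∀ l : List V, IsUPath E u v l → Blocked E K l

open Relation

section
variable {V : Type*} {E : V → V → Prop}

theorem colliderAt_iff {l : List V} {t : ℕ} :
    ColliderAt E l t ↔ ∃ h : t + 2 < l.length, E l[t] l[t + 1] ∧ E l[t + 2] l[t + 1] := by
  constructor
  · rintro ⟨a, w, b, ha, hw, hb, hab, hbw⟩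
    obtain ⟨h, rfl⟩ := List.getElem?_eq_some_iff.mp hb
    rw [List.getElem?_eq_getElem (by omega), Option.some_inj] at ha hw
    subst ha hw
    exact ⟨h, hab, hbw⟩
  · rintro ⟨h, haw, hbw⟩
    exact ⟨_, _, _, List.getElem?_eq_getElem _, List.getElem?_eq_getElem _,
      List.getElem?_eq_getElem _, haw, hbw⟩

theorem Blocked.of_mem_of_not_collider {K : Set V} {l : List V} {t : ℕ} (ht : t + 2 < l.length)
    (hK : l[t + 1] ∈ K) (hnc : ¬ (E l[t] l[t + 1] ∧ E l[t + 2] l[t + 1])) : Blocked E K l :=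
  Or.inl ⟨t, _, List.getElem?_eq_getElem _, ht,
    fun h => hnc (by obtain ⟨_, h⟩ := colliderAt_iff.mp h; exact h), hK⟩

theorem Blocked.of_collider {K : Set V} {l : List V} {t : ℕ} (ht : t + 2 < l.length)
    (hin : E l[t] l[t + 1]) (hin' : E l[t + 2] l[t + 1]) (hK : l[t + 1] ∉ K)
    (hdesc : ∀ d, TransGen E l[t + 1] d → d ∉ K) : Blocked E K l :=
  Or.inr ⟨t, _, List.getElem?_eq_getElem _, colliderAt_iff.mpr ⟨ht, hin, hin'⟩, hK, hdesc⟩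

theorem List.reflTransGen_getElem_of_forall_lt {l : List V} {t : ℕ} (ht : t < l.length)
    (hfwd : ∀ k (hk : k < t), E l[k] l[k + 1]) : ReflTransGen E l[0] l[t] := by
  induction t with
  | zero => rfl
  | succ s ih => exact (ih (by omega) fun k hk => hfwd k (by omega)).tail (hfwd s (by omega))

theorem List.forall_or_exists_first_backward {l : List V}
    (hl : l.IsChain fun a b => E a b ∨ E b a) :
    (∀ k (hk : k + 1 < l.length), E l[k] l[k + 1]) ∨
      ∃ t, ∃ ht : t + 1 < l.length, E l[t + 1] l[t] ∧
        ∀ k (hk : k < t), E l[k] l[k + 1] := by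
  classical
  have hedge := List.isChain_iff_getElem.mp hl
  by_cases hback : ∃ t, ∃ ht : t + 1 < l.length, E l[t + 1] l[t]
  · right
    obtain ⟨ht, hE⟩ := Nat.find_spec hback
    refine ⟨_, ht, hE, fun k hk => (hedge k (by omega)).resolve_right fun h => ?_⟩
    exact Nat.find_min hback hk ⟨by omega, h⟩
  · push Not at hback
    exact Or.inl fun k hk => (hedge k hk).resolve_right (hback k hk)

theorem IsUPath.getElem_zero {u v : V} {l : List V} (hl : IsUPath E u v l) (h : 0 < l.length) :
    l[0] = u := by
  simpa [List.head?_eq_getElem?, List.getElem?_eq_getElem h] using hl.2.1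

theorem IsUPath.getElem_length_sub_one {u v : V} {l : List V} (hl : IsUPath E u v l)
    (h : l.length - 1 < l.length) : l[l.length - 1] = v := by
  simpa [List.getLast?_eq_getElem?, List.getElem?_eq_getElem h] using hl.2.2.1

theorem IsUPath.blocked {K : Set V} {i j : V} {l : List V} (hl : IsUPath E i j l)
    (hij : ¬ ReflTransGen E i j) (hji : ¬ E j i) (hpa : ∀ x, E x i → x ∈ K)
    (hde : ∀ d, TransGen E i d → d ∉ K) : Blocked E K l := by
  have hlen : 0 < l.length := List.length_pos_iff.mpr (by rintro rfl; simp [IsUPath] at hl)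
  rcases List.forall_or_exists_first_backward hl.2.2.2 with hfwd | ⟨t, ht, hback, hfwd⟩
  · refine absurd ?_ hij
    rw [← hl.getElem_zero hlen, ← hl.getElem_length_sub_one (by omega)]
    exact List.reflTransGen_getElem_of_forall_lt _ fun k hk => hfwd k (by omega)
  cases t with
  | zero =>
    rw [hl.getElem_zero] at hback
    have h2 : 2 < l.length := by
      by_contra h
      have hlast := hl.getElem_length_sub_one (by omega)
      simp only [show l.length - 1 = 1 by omega] at hlast
      exact hji (hlast ▸ hback)
    refine Blocked.of_mem_of_not_collider h2 (hpa _ hback) fun ⟨hout, _⟩ => ?_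
    rw [hl.getElem_zero] at hout
    exact hde _ (.single hout) (hpa _ hback)
  | succ s =>
    have hdesc : TransGen E i l[s + 1] := by
      rw [← hl.getElem_zero hlen]
      exact .tail' (List.reflTransGen_getElem_of_forall_lt _ fun k hk => hfwd k (by omega))
        (hfwd s (by omega))
    exact Blocked.of_collider ht (hfwd s (by omega)) hback (hde _ hdesc)
      fun d hd => hde d (hdesc.trans hd)

end

theorem stmt9_general {V : Type*} (Ca : V → Set V)
    (acyclic : ∀ v : V, ¬ Relation.TransGen (fun k l => k ∈ Ca l) v v)
    (i j : V) (hne : i ≠ j)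
    (hanc : ¬ Relation.TransGen (fun k l => k ∈ Ca l) i j)
    (hji : j ∉ Ca i) :
    DSep (fun k l => k ∈ Ca l) {i} {j} (Ca i ∪ Ca j) := by
  intro u hu v hv l hl
  rw [Set.mem_singleton_iff] at hu hv
  subst u v
  refine hl.blocked (by rw [reflTransGen_iff_eq_or_transGen]; tauto) hji (fun _ => .inl) ?_
  rintro d hd (hdi | hdj)
  · exact acyclic i (hd.tail hdi)
  · exact hanc (hd.tail hdj)

/-- in the DAG with edges `(k, l)` for `k ∈ Ca l`, if `i` is not an
ancestor of `j`, `j` is not a parent of `i`, and `i` is not a parent of `j`, then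
`Ca i ∪ Ca j` d-separates `{i}` from `{j}`. -/
theorem stmt9 {V : Type*} [Finite V] (Ca : V → Set V)
    (acyclic : ∀ v : V, ¬ Relation.TransGen (fun k l => k ∈ Ca l) v v)
    (i j : V) (hne : i ≠ j)
    (hanc : ¬ Relation.TransGen (fun k l => k ∈ Ca l) i j)
    (hji : j ∉ Ca i) (hij : i ∉ Ca j) :
    DSep (fun k l => k ∈ Ca l) {i} {j} (Ca i ∪ Ca j) :=
  stmt9_general Ca acyclic i j hne hanc hji
end

section
/- Let G be a DAG on finite vertex set V, i ∈ V, and j ∈ V a nondescendant of i with j ∉ Pa(i) and i ∉ Pa(j). Then Pa(i) ∪ {j} d-separates {i} from Pa(j) \ Pa(i) in G. -/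
set_option linter.unnecessarySeqFocus false


lemma chainTrans {V : Type*} (E : V → V → Prop) (l : List V) (k : ℕ) (hk : k < l.length)
    (h : ∀ t, ∀ _ : t + 1 ≤ k, E (l[t]'(by omega)) (l[t+1]'(by omega)))
    (hpos : 0 < k) :
    Relation.TransGen E (l[0]'(by omega)) (l[k]'hk) := by
  induction k with
  | zero => omega
  | succ k ih =>
    rcases Nat.eq_zero_or_pos k with rfl | hp
    · exact .single (h 0 le_rfl)
    · exact (ih (by omega) (fun t ht => h t (by omega)) hp).tail (h k le_rfl)

/-- if `j` is a nondescendant of `i` with `j ∉ Pa i` and `i ∉ Pa j`,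
then `Pa i ∪ {j}` d-separates `{i}` from `Pa j \ Pa i`. -/
theorem stmt10 {V : Type*} [Finite V] (E : V → V → Prop)
    (acyclic : ∀ v : V, ¬ Relation.TransGen E v v)
    (i j : V) (hne : j ≠ i) (hnd : ¬ Relation.TransGen E i j)
    (hji : ¬ E j i) (hij : ¬ E i j) :
    DSep E {i} ({u | E u j} \ {u | E u i}) ({u | E u i} ∪ {j}) := by
  classical
  intro u hu v hv l hl
  simp only [Set.mem_singleton_iff] at hu
  subst hu
  obtain ⟨hvj, hvi⟩ := hv
  simp only [Set.mem_setOf_eq] at hvj hvi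
  obtain ⟨hnodup, hhead, hlast, hchain⟩ := hl
  have hKmem : ∀ w : V, w ∈ ({x | E x u} ∪ {j} : Set V) ↔ (E w u ∨ w = j) := by
    intro w
    simp only [Set.mem_union, Set.mem_setOf_eq, Set.mem_singleton_iff]
  -- basic index facts
  have hlpos : 0 < l.length := by
    cases l with
    | nil => simp at hhead
    | cons a t => simp
  have h0 : l[0]'hlpos = u := by
    rw [List.head?_eq_getElem?] at hhead
    simpa using (List.getElem?_eq_getElem hlpos).symm.trans hhead
  have hlastE : l[l.length - 1]'(by omega) = v := by
    rw [List.getLast?_eq_getElem?] at hlast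
    simpa using (List.getElem?_eq_getElem
      (show l.length - 1 < l.length by omega)).symm.trans hlast
  have hch : ∀ t : ℕ, ∀ _ : t + 1 < l.length,
      E (l[t]'(by omega)) (l[t+1]'(by omega)) ∨ E (l[t+1]'(by omega)) (l[t]'(by omega)) := by
    intro t ht
    have := List.isChain_iff_getElem.mp hchain t (by omega)
    simpa using this
  have hiv : u ≠ v := by
    rintro rfl; exact hij hvj
  have hlen2 : 2 ≤ l.length := by
    by_contra h
    have : l.length = 1 := by omega
    apply hiv
    rw [← h0, ← hlastE]
    congr 1; omega
  have hgetD : ∀ t : ℕ, ∀ h : t < l.length, l[t]?.getD u = l[t]'h := by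
    intro t h; rw [List.getElem?_eq_getElem h]; rfl
  by_cases hex : ∃ k, k + 1 < l.length ∧ ¬ E (l[k]?.getD u) (l[k+1]?.getD u)
  · -- there is a backward edge; take the least one
    obtain ⟨k, ⟨hk1, hkb⟩, hmin⟩ :
        ∃ k, (k + 1 < l.length ∧ ¬ E (l[k]?.getD u) (l[k+1]?.getD u)) ∧
          ∀ m, m < k → ¬(m + 1 < l.length ∧ ¬ E (l[m]?.getD u) (l[m+1]?.getD u)) :=
      ⟨Nat.find hex, Nat.find_spec hex, fun m hm => Nat.find_min hex hm⟩
    have hkb' : E (l[k+1]'hk1) (l[k]'(by omega)) := by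
      rcases hch k hk1 with h | h
      · exact absurd (by rwa [hgetD k (by omega), hgetD (k+1) hk1]) hkb
      · exact h
    have hfwd : ∀ m, ∀ _ : m + 1 ≤ k, E (l[m]'(by omega)) (l[m+1]'(by omega)) := by
      intro m hm
      have hnp := hmin m (by omega)
      push_neg at hnp
      have := hnp (by omega)
      rwa [hgetD m (by omega), hgetD (m+1) (by omega)] at this
    rcases Nat.eq_zero_or_pos k with hk0 | hkpos
    · -- k = 0 : edge into u at the start
      subst hk0
      have hE1i : E (l[1]'hk1) u := by simpa [h0] using hkb'
      rcases Nat.lt_or_ge 2 l.length with h3 | h3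
      · -- length ≥ 3 : non-collider in K
        left
        refine ⟨0, l[1]'hk1, List.getElem?_eq_getElem hk1, h3, ?_, ?_⟩
        · rintro ⟨a, w, b, ha, hw, hb, hEaw, hEbw⟩
          rw [List.getElem?_eq_getElem hlpos] at ha
          rw [List.getElem?_eq_getElem hk1] at hw
          cases ha; cases hw
          rw [h0] at hEaw
          exact acyclic u ((Relation.TransGen.single hEaw).tail hE1i)
        · exact (hKmem _).mpr (Or.inl hE1i)
      · -- length = 2 : l = [u, v], but then E v u, contradiction
        exfalso
        have hlen : l.length = 2 := by omega
        have hv1 : l[1]'hk1 = v := by rw [← hlastE]; congr 1; omega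
        rw [hv1] at hE1i
        exact hvi hE1i
    · -- k ≥ 1 : collider at l[k]
      right
      have hik : Relation.TransGen E u (l[k]'(by omega)) := by
        have := chainTrans E l k (by omega) hfwd hkpos
        rwa [h0] at this
      have hnotK : ∀ d, Relation.TransGen E u d → d ∉ ({x | E x u} ∪ {j} : Set V) := by
        intro d hd hdK
        rcases (hKmem d).mp hdK with hdi | rfl
        · exact acyclic u (hd.tail hdi)
        · exact hnd hd
      refine ⟨k - 1, l[k]'(by omega), ?_, ?_, ?_, ?_⟩
      · rw [show k - 1 + 1 = k by omega]
        exact List.getElem?_eq_getElem (by omega)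
      · refine ⟨l[k-1]'(by omega), l[k]'(by omega), l[k+1]'hk1,
          List.getElem?_eq_getElem (by omega), ?_, ?_, ?_, hkb'⟩
        · rw [show k - 1 + 1 = k by omega]; exact List.getElem?_eq_getElem (by omega)
        · rw [show k - 1 + 2 = k + 1 by omega]; exact List.getElem?_eq_getElem hk1
        · have := hfwd (k-1) (by omega)
          convert this using 2 <;> omega
      · exact hnotK _ hik
      · intro d hd
        exact hnotK d (hik.trans hd)
  · -- no backward edge: directed path u → ... → v, contradiction with hnd
    exfalso
    push_neg at hex
    have hfwd : ∀ t, ∀ _ : t + 1 ≤ l.length - 1,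
        E (l[t]'(by omega)) (l[t+1]'(by omega)) := by
      intro t ht
      have := hex t (by omega)
      rwa [hgetD t (by omega), hgetD (t+1) (by omega)] at this
    have := chainTrans E l (l.length - 1) (by omega) hfwd (by omega)
    rw [h0, hlastE] at this
    exact hnd (this.tail hvj)
end

section
/- Let μ be a strictly positive probability distribution on a finite product space and G a DAG representing it (μ factorizes according to G and the factorization is minimal). Then for any three pairwise disjoint coordinate sets A, B, K: if K d-separates A from B in G, then A and B are conditionally independent given K under μ. -/
open scoped Classical BigOperators

/-- Marginal of `μ` on the coordinate set `S`, evaluated at the realization `x`. -/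
noncomputable def marg {N : ℕ} {X : Fin N → Type*} [∀ i, Fintype (X i)]
    (μ : (∀ i, X i) → ℝ) (S : Finset (Fin N)) (x : ∀ i, X i) : ℝ :=
  ∑ y : ∀ i, X i, if ∀ i ∈ S, y i = x i then μ y else 0

/-- Conditional probability `μ(x_i | x_S)`, defined as a ratio of marginals. -/
noncomputable def condP {N : ℕ} {X : Fin N → Type*} [∀ i, Fintype (X i)]
    (μ : (∀ i, X i) → ℝ) (i : Fin N) (S : Finset (Fin N)) (x : ∀ i, X i) : ℝ :=
  marg μ (insert i S) x / marg μ S x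

/-- Conditional independence `A ⊥ B | C` under `μ`. -/
def CI {N : ℕ} {X : Fin N → Type*} [∀ i, Fintype (X i)]
    (μ : (∀ i, X i) → ℝ) (A B C : Finset (Fin N)) : Prop :=
  ∀ x, marg μ (A ∪ B ∪ C) x / marg μ (B ∪ C) x = marg μ (A ∪ C) x / marg μ C x

/-!
Let `W` be the set of ancestors of `A ∪ B ∪ K`. When an ancestral set is enlarged by a vertex `j`
whose parents lie in it, the factor of `j` is the only one involving `x_j`, and it sums to `1`
over `x_j`; by induction, `marg μ W = ∏_{i ∈ W} μ(x_i | x_{Pa i})`.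

Call a walk active if none of its interior vertices blocks it. Cutting a loop out of an active
walk keeps it active (a loop leaving `v` along an out-edge returns through a collider below `v`),
so d-separation excludes active walks as well as paths. Let `T` be the set of vertices of `W \ K`
joined to `B` by an active walk; it misses `A`. Let `u ∈ T` and `v ∉ K` lie in one family
`{i} ∪ Pa i` with `i ∈ W`, and follow a directed path from `i` to the first vertex `z` of
`A ∪ B ∪ K`. If `z ∈ K`, the walk of `u` continues actively through `i` to `v`; if `z ∈ B`, the
path from `v` through `i` to `z` is active; and `z ∈ A` is impossible, since the walk of `u`
would extend to `z`. So `v ∈ T`: every family of `W` lies in `T ∪ K` or misses `T`, and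
`marg μ W = f * g` with `f` depending only on the coordinates in `T ∪ K` and `g` only on those
in `W \ T`. For positive `f` and `g` such a factorization gives `A ⊥ B | K`.
-/

open Relation

theorem List.exists_eq_append_cons_append_cons_of_not_nodup {α : Type*} {l : List α}
    (h : ¬ l.Nodup) : ∃ l₁ v l₂ l₃, l = l₁ ++ v :: (l₂ ++ v :: l₃) := by
  obtain ⟨v, hv⟩ : ∃ v, [v, v].Sublist l := by simpa [List.nodup_iff_sublist] using h
  obtain ⟨r₁, r₂, rfl, hv₁, hv₂⟩ := List.cons_sublist_iff.1 hv
  obtain ⟨l₁, t, rfl⟩ := List.append_of_mem hv₁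
  obtain ⟨s, l₃, rfl⟩ := List.append_of_mem (List.singleton_sublist.1 hv₂)
  exact ⟨l₁, v, t ++ s, l₃, by simp⟩

theorem Relation.ReflTransGen.exists_first_mem {α : Type*} {r : α → α → Prop} {s : Set α}
    {a b : α} (h : ReflTransGen r a b) (hb : b ∈ s) :
    ∃ z ∈ s, ReflTransGen (fun x y => r x y ∧ x ∉ s) a z := by
  induction h using ReflTransGen.head_induction_on with
  | refl => exact ⟨b, hb, .refl⟩
  | @head a c hac _ ih =>
    obtain ⟨z, hz, hcz⟩ := ih
    by_cases ha : a ∈ s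
    · exact ⟨a, ha, .refl⟩
    · exact ⟨z, hz, .head ⟨hac, ha⟩ hcz⟩

theorem Finset.exists_mem_forall_rel_notMem_of_acyclic {V : Type*} [Finite V]
    {E : V → V → Prop} (hacy : ∀ v, ¬ TransGen E v v) {U : Finset V} (hU : U.Nonempty) :
    ∃ j ∈ U, ∀ p, E p j → p ∉ U := by
  have : Std.Irrefl (TransGen E) := ⟨hacy⟩
  obtain ⟨j, hj, hmin⟩ :=
    (Finite.wellFounded_of_trans_of_irrefl (TransGen E)).has_min (U : Set V) hU
  exact ⟨j, hj, fun p hp hpU => hmin p hpU (.single hp)⟩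

theorem DependsOn.apply_update {ι β : Type*} {α : ι → Type*} [DecidableEq ι]
    {f : (∀ i, α i) → β} {s : Set ι} (hf : DependsOn f s) {j : ι} (hj : j ∉ s)
    (x : ∀ i, α i) (v : α j) : f (Function.update x j v) = f x :=
  hf fun _ hi => Function.update_of_ne (ne_of_mem_of_not_mem hi hj) _ _

namespace DAG

variable {V : Type*} (E : V → V → Prop) (K : Set V)

/-- The walk `… a w b …` is not blocked by `K` at `w`. -/
def ActiveAt (a w b : V) : Prop :=
  (E a w ∧ E b w → ∃ d ∈ K, ReflTransGen E w d) ∧ (¬ (E a w ∧ E b w) → w ∉ K)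

def IsActive : List V → Prop
  | a :: w :: b :: l => ActiveAt E K a w b ∧ IsActive (w :: b :: l)
  | _ => True

def ActiveReach (B : Set V) (v : V) : Prop :=
  ∃ l, IsActive E K (v :: l) ∧ (v :: l).IsChain (SymmGen E) ∧
    ∃ b ∈ B, (v :: l).getLast? = some b

variable {E K}

theorem ActiveAt.of_notMem {a w b : V} (hw : w ∉ K) (hcol : ¬ (E a w ∧ E b w)) :
    ActiveAt E K a w b :=
  ⟨fun h => absurd h hcol, fun _ => hw⟩

theorem ActiveAt.of_notMem_of_reaches {a w b : V} (hw : w ∉ K)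
    (hd : ∃ d ∈ K, ReflTransGen E w d) : ActiveAt E K a w b :=
  ⟨fun _ => hd, fun _ => hw⟩

theorem ActiveAt.of_collider {a w b : V} (ha : E a w) (hb : E b w)
    (hd : ∃ d ∈ K, ReflTransGen E w d) : ActiveAt E K a w b :=
  ⟨fun _ => hd, fun h => absurd ⟨ha, hb⟩ h⟩

/-- Cutting a loop `v w … g v` out of a walk `… u v w … g v y …` leaves `v` active. -/
theorem ActiveAt.shortcut {u v w g y : V} (h₁ : ActiveAt E K u v w) (h₂ : ActiveAt E K g v y)
    (hloop : ¬ E w v → ∃ d ∈ K, ReflTransGen E v d) : ActiveAt E K u v y := by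
  refine ⟨fun ⟨huv, _⟩ => ?_, fun hcol hv => hcol ⟨?_, ?_⟩⟩
  · by_cases hwv : E w v
    · exact h₁.1 ⟨huv, hwv⟩
    · exact hloop hwv
  · exact (of_not_not (mt h₁.2 (not_not_intro hv))).1
  · exact (of_not_not (mt h₂.2 (not_not_intro hv))).2

theorem IsActive.cons {v u : V} {l : List V} (h : IsActive E K (u :: l))
    (hv : ∀ w ∈ l.head?, ActiveAt E K v u w) : IsActive E K (v :: u :: l) := by
  cases l with
  | nil => trivial
  | cons w l => exact ⟨hv w rfl, h⟩

theorem IsActive.tail {a : V} : ∀ {l : List V}, IsActive E K (a :: l) → IsActive E K l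
  | [], _ | [_], _ => trivial
  | _ :: _ :: _, h => h.2

theorem IsActive.of_append_right : ∀ {xs ys : List V}, IsActive E K (xs ++ ys) →
    IsActive E K ys
  | [], _, h => h
  | _ :: _, _, h => IsActive.of_append_right h.tail

theorem IsActive.of_append_left : ∀ {xs ys : List V}, IsActive E K (xs ++ ys) →
    IsActive E K xs
  | [], _, _ | [_], _, _ | [_, _], _, _ => trivial
  | _ :: _ :: _ :: _, _, h => ⟨h.1, IsActive.of_append_left h.2⟩

theorem IsActive.infix {l l' : List V} (h : IsActive E K l) (hl : l' <:+: l) :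
    IsActive E K l' := by
  obtain ⟨s, t, rfl⟩ := hl
  exact h.of_append_left.of_append_right

theorem IsActive.activeAt_of_infix {l : List V} {a w b : V} (h : IsActive E K l)
    (hl : [a, w, b] <:+: l) : ActiveAt E K a w b :=
  (h.infix hl).1

theorem IsActive.append {v : V} : ∀ {xs ys : List V}, IsActive E K (xs ++ [v]) →
    IsActive E K (v :: ys) →
    (∀ u ∈ xs.getLast?, ∀ y ∈ ys.head?, ActiveAt E K u v y) → IsActive E K (xs ++ v :: ys)
  | [], _, _, h, _ => h
  | [u], _, _, h, hj => h.cons fun y hy => hj u rfl y hy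
  | [_, u], _, h₁, h, hj => ⟨h₁.1, h.cons fun y hy => hj u rfl y hy⟩
  | _ :: b :: c :: xs, _, h₁, h, hj =>
    ⟨h₁.1, IsActive.append (xs := b :: c :: xs) h₁.2 h fun u hu => hj u (by simpa using hu)⟩

theorem IsActive.activeAt_of_getElem? {l : List V} (h : IsActive E K l) {t : ℕ} {a w b : V}
    (ha : l[t]? = some a) (hw : l[t+1]? = some w) (hb : l[t+2]? = some b) :
    ActiveAt E K a w b := by
  induction t generalizing l with
  | zero =>
    match l with
    | _ :: _ :: _ :: _ =>
      simp only [List.getElem?_cons_zero, List.getElem?_cons_succ, Option.some_inj] at ha hw hb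
      subst ha hw hb
      exact h.1
  | succ t ih =>
    match l with
    | _ :: _ => exact ih h.tail ha hw hb

theorem IsActive.not_blocked {l : List V} (h : IsActive E K l) : ¬ Blocked E K l := by
  rintro (⟨t, w, hw, hlen, hnc, hK⟩ |
    ⟨t, w, hw, ⟨a, w', b, ha, hw', hb, haw, hbw⟩, hwK, hdesc⟩)
  · have ha : l[t]? = some l[t] := List.getElem?_eq_getElem (by omega)
    have hb : l[t+2]? = some l[t+2] := List.getElem?_eq_getElem hlen
    refine (h.activeAt_of_getElem? ha hw hb).2 ?_ hK
    exact fun hcol => hnc ⟨_, w, _, ha, hw, hb, hcol⟩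
  · obtain rfl : w' = w := Option.some_inj.1 (hw'.symm.trans hw)
    obtain ⟨d, hdK, hwd⟩ := (h.activeAt_of_getElem? ha hw' hb).1 ⟨haw, hbw⟩
    rcases reflTransGen_iff_eq_or_transGen.1 hwd with rfl | hwd
    · exact hwK hdK
    · exact hdesc d hwd hdK

variable {A B : Set V}

theorem activeReach_of_mem {b : V} (hb : b ∈ B) : ActiveReach E K B b :=
  ⟨[], trivial, .singleton b, b, hb, rfl⟩

variable (hacy : ∀ v, ¬ TransGen E v v)
include hacy

theorem IsActive.exists_reaches_of_return {v : V} : ∀ {p w : V} {l : List V},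
    IsActive E K (p :: w :: l) → (w :: l).IsChain (SymmGen E) → E p w → ReflTransGen E v p →
    (w :: l).getLast? = some v → ∃ d ∈ K, ReflTransGen E v d
  | p, w, [], _, _, hpw, hvp, hlast => by
    obtain rfl : w = v := by simpa using hlast
    exact (hacy w (.tail' hvp hpw)).elim
  | p, w, y :: l, h, hc, hpw, hvp, hlast => by
    rcases (List.isChain_cons_cons.1 hc).1 with hwy | hyw
    · exact IsActive.exists_reaches_of_return h.2 (List.isChain_cons_cons.1 hc).2 hwy
        (hvp.tail hpw) (by simpa using hlast)
    · obtain ⟨d, hdK, hwd⟩ := h.1.1 ⟨hpw, hyw⟩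
      exact ⟨d, hdK, (hvp.tail hpw).trans hwd⟩

theorem IsActive.shortcut {l₁ l₂ l₃ : List V} {v : V}
    (h : IsActive E K (l₁ ++ v :: (l₂ ++ v :: l₃)))
    (hc : (l₁ ++ v :: (l₂ ++ v :: l₃)).IsChain (SymmGen E)) :
    IsActive E K (l₁ ++ v :: l₃) := by
  have hpre : IsActive E K (l₁ ++ [v]) :=
    (show IsActive E K ((l₁ ++ [v]) ++ (l₂ ++ v :: l₃)) by simpa using h).of_append_left
  have hsuf : IsActive E K (v :: l₃) :=
    (show IsActive E K ((l₁ ++ v :: l₂) ++ v :: l₃) by simpa using h).of_append_right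
  refine hpre.append hsuf fun u hu y hy => ?_
  obtain ⟨l₁, rfl⟩ := List.getLast?_eq_some_iff.1 hu
  obtain ⟨l₃, rfl⟩ := List.head?_eq_some_iff.1 hy
  obtain _ | ⟨w, l₂⟩ := l₂
  · have hvv : SymmGen E v v :=
      List.isChain_pair.1 (hc.infix (l₁ := [v, v]) ⟨l₁ ++ [u], y :: l₃, by simp⟩)
    exact (hacy v (.single (hvv.elim id id))).elim
  obtain ⟨m, g, hm⟩ : ∃ m g, w :: l₂ = m ++ [g] :=
    ⟨_, _, (List.dropLast_append_getLast (List.cons_ne_nil w l₂)).symm⟩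
  refine ActiveAt.shortcut (w := w) (g := g)
    (h.activeAt_of_infix ⟨l₁, l₂ ++ v :: y :: l₃, by simp⟩)
    (h.activeAt_of_infix ⟨l₁ ++ u :: v :: m, l₃, by rw [hm]; simp⟩) fun hwv => ?_
  have hvw : E v w := (List.isChain_pair.1 (hc.infix (l₁ := [v, w])
    ⟨l₁ ++ [u], l₂ ++ v :: y :: l₃, by simp⟩)).resolve_right hwv
  have hloop : v :: w :: (l₂ ++ [v]) <:+: l₁ ++ [u] ++ v :: (w :: l₂ ++ v :: y :: l₃) :=
    ⟨l₁ ++ [u], y :: l₃, by simp⟩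
  exact (h.infix hloop).exists_reaches_of_return hacy (hc.infix hloop).tail hvw .refl
    (by rw [← List.cons_append, List.getLast?_concat])

theorem exists_nodup_isActive (l : List V) (hc : l.IsChain (SymmGen E)) (ha : IsActive E K l) :
    ∃ l', l'.Nodup ∧ l'.head? = l.head? ∧ l'.getLast? = l.getLast? ∧
      l'.IsChain (SymmGen E) ∧ IsActive E K l' := by
  induction hn : l.length using Nat.strong_induction_on generalizing l with
  | _ n ih =>
  by_cases hnd : l.Nodup
  · exact ⟨l, hnd, rfl, rfl, hc, ha⟩
  obtain ⟨l₁, v, l₂, l₃, rfl⟩ := List.exists_eq_append_cons_append_cons_of_not_nodup hnd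
  have hc' : (l₁ ++ v :: l₃).IsChain (SymmGen E) := List.isChain_split.2
    ⟨(List.isChain_split.1 hc).1, hc.infix ⟨l₁ ++ v :: l₂, [], by simp⟩⟩
  obtain ⟨l', hnd', hh, hl, hc'', ha'⟩ :=
    ih _ (by rw [← hn]; simp) _ hc' (ha.shortcut hacy hc) rfl
  refine ⟨l', hnd', hh.trans (by cases l₁ <;> simp), hl.trans ?_, hc'', ha'⟩
  rw [show l₁ ++ v :: (l₂ ++ v :: l₃) = (l₁ ++ v :: l₂) ++ v :: l₃ by simp,
    List.getLast?_append_cons, List.getLast?_append_cons]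

theorem not_activeReach_of_dSep (hsep : DSep E A B K) {a : V} (ha : a ∈ A) :
    ¬ ActiveReach E K B a := by
  rintro ⟨l, hl, hc, b, hb, hlast⟩
  obtain ⟨l', hnd, hh, hl', hc', ha'⟩ := exists_nodup_isActive hacy _ hc hl
  exact ha'.not_blocked (hsep a ha b hb l' ⟨hnd, hh, hl'.trans hlast, hc'⟩)

theorem IsActive.cons_child {u c : V} {l : List V} (hl : IsActive E K (u :: l)) (huK : u ∉ K)
    (huc : E u c) : IsActive E K (c :: u :: l) :=
  hl.cons fun _ _ => ActiveAt.of_notMem huK fun h => hacy u (.tail (.single huc) h.1)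

theorem ActiveReach.child {u c : V} (hu : ActiveReach E K B u) (huK : u ∉ K) (huc : E u c) :
    ActiveReach E K B c := by
  obtain ⟨l, hl, hc, b, hb, hlast⟩ := hu
  exact ⟨u :: l, hl.cons_child hacy huK huc, hc.cons_cons (.of_rel_symm huc), b, hb,
    by simpa using hlast⟩

theorem ActiveReach.of_reflTransGen {u z : V} (hu : ActiveReach E K B u)
    (huz : ReflTransGen (fun a b => E a b ∧ a ∉ K) u z) : ActiveReach E K B z := by
  induction huz with
  | refl => exact hu
  | tail _ hbc ih => exact ih.child hacy hbc.2 hbc.1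

theorem activeReach_of_reflTransGen_mem {v z : V}
    (hvz : ReflTransGen (fun a b => E a b ∧ a ∉ K) v z) (hz : z ∈ B) (hzK : z ∉ K) :
    ActiveReach E K B v := by
  -- a walk leaving each vertex along an out-edge has no colliders
  suffices h : v ∉ K ∧ ∃ l, IsActive E K (v :: l) ∧ (v :: l).IsChain (SymmGen E) ∧
      (∃ b ∈ B, (v :: l).getLast? = some b) ∧ ∀ w ∈ l.head?, E v w by
    obtain ⟨-, l, hl, hc, hlast, -⟩ := h
    exact ⟨l, hl, hc, hlast⟩
  induction hvz using ReflTransGen.head_induction_on with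
  | refl => exact ⟨hzK, [], trivial, .singleton z, ⟨z, hz, rfl⟩, by simp⟩
  | head hvc _ ih =>
    obtain ⟨hcK, l, hl, hc, hlast, hhead⟩ := ih
    refine ⟨hvc.2, _ :: l, hl.cons fun w hw => ActiveAt.of_notMem hcK fun h => ?_,
      hc.cons_cons (.of_rel hvc.1), by simpa using hlast, by simpa using hvc.1⟩
    exact hacy _ (.tail (.single (hhead w hw)) h.2)

theorem ActiveReach.parent_of_collider {u v c : V} (hu : ActiveReach E K B u) (huK : u ∉ K)
    (huc : c = u ∨ E u c) (hvc : E v c) (hc : ∃ d ∈ K, ReflTransGen E c d) :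
    ActiveReach E K B v := by
  obtain ⟨l, hl, hch, b, hb, hlast⟩ := hu
  rcases huc with rfl | huc
  · exact ⟨c :: l, hl.cons fun _ _ => .of_notMem_of_reaches huK hc,
      hch.cons_cons (.of_rel hvc), b, hb, by simpa using hlast⟩
  · exact ⟨c :: u :: l, (hl.cons_child hacy huK huc).cons fun _ hw => by
        cases hw; exact .of_collider hvc huc hc,
      (hch.cons_cons (.of_rel_symm huc)).cons_cons (.of_rel hvc), b, hb, by simpa using hlast⟩

theorem ActiveReach.of_family (hsep : DSep E A B K) (hBK : Disjoint B K) {i u v : V}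
    (hi : ∃ z ∈ A ∪ B ∪ K, ReflTransGen E i z) (hu : u = i ∨ E u i) (hv : v = i ∨ E v i)
    (hr : ActiveReach E K B u) (huK : u ∉ K) (hvK : v ∉ K) : ActiveReach E K B v := by
  rcases hv with rfl | hvi
  · rcases hu with rfl | hui
    · exact hr
    · exact hr.child hacy huK hui
  obtain ⟨z, hz, hiz⟩ := hi
  obtain ⟨z, hz, hiz⟩ := hiz.exists_first_mem hz
  have hiz' : ReflTransGen (fun a b => E a b ∧ a ∉ K) i z :=
    ReflTransGen.mono (fun _ _ h => ⟨h.1, fun ha => h.2 (Or.inr ha)⟩) _ _ hiz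
  rcases hz with (hzA | hzB) | hzK
  · have hui : ReflTransGen (fun a b => E a b ∧ a ∉ K) u i := by
      rcases hu with rfl | hui
      exacts [.refl, .single ⟨hui, huK⟩]
    exact (not_activeReach_of_dSep hacy hsep hzA (hr.of_reflTransGen hacy (hui.trans hiz'))).elim
  · exact activeReach_of_reflTransGen_mem hacy (.head ⟨hvi, hvK⟩ hiz') hzB
      (Set.disjoint_left.1 hBK hzB)
  · exact hr.parent_of_collider hacy huK (hu.imp Eq.symm id) hvi
      ⟨z, hzK, ReflTransGen.mono (fun _ _ h => h.1) _ _ hiz⟩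

theorem exists_separator_of_dSep (hsep : DSep E A B K) (hBK : Disjoint B K) {W : Finset V}
    (hBW : B ⊆ W) (hW : ∀ c ∈ W, ∃ z ∈ A ∪ B ∪ K, ReflTransGen E c z) :
    ∃ T : Finset V, B ⊆ T ∧ Disjoint A T ∧
      ∀ i ∈ W, ∀ u v, (u = i ∨ E u i) → (v = i ∨ E v i) → u ∈ T → v ∈ W → v ∉ K → v ∈ T := by
  refine ⟨W.filter fun v => v ∉ K ∧ ActiveReach E K B v, fun b hb => ?_, ?_, ?_⟩
  · exact Finset.mem_filter.2 ⟨hBW hb, Set.disjoint_left.1 hBK hb, activeReach_of_mem hb⟩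
  · exact Set.disjoint_left.2 fun a ha haT =>
      not_activeReach_of_dSep hacy hsep ha (Finset.mem_filter.1 haT).2.2
  · intro i hi u v hu hv huT hvW hvK
    obtain ⟨-, huK, hur⟩ := Finset.mem_filter.1 huT
    exact Finset.mem_filter.2 ⟨hvW, hvK, hur.of_family hacy hsep hBK (hW i hi) hu hv huK hvK⟩

end DAG

section Marginals

variable {N : ℕ} {X : Fin N → Type*} [∀ i, Fintype (X i)]

theorem dependsOn_marg (h : (∀ i, X i) → ℝ) (S : Finset (Fin N)) :
    DependsOn (marg h S) (S : Set (Fin N)) := fun _ _ hxy =>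
  Finset.sum_congr rfl fun _ _ => if_congr
    ⟨fun hz i hi => (hz i hi).trans (hxy i hi), fun hz i hi => (hz i hi).trans (hxy i hi).symm⟩
    rfl rfl

theorem marg_pos {h : (∀ i, X i) → ℝ} (hh : ∀ y, 0 < h y) (S : Finset (Fin N))
    (x : ∀ i, X i) : 0 < marg h S x :=
  Finset.sum_pos' (fun y _ => by split_ifs <;> simp [(hh y).le])
    ⟨x, Finset.mem_univ x, by simpa using hh x⟩

theorem marg_univ (h : (∀ i, X i) → ℝ) (x : ∀ i, X i) : marg h Finset.univ x = h x := by
  simp [marg, ← funext_iff]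

theorem marg_ite (h : (∀ i, X i) → ℝ) (S U : Finset (Fin N)) (x : ∀ i, X i) :
    marg (fun y => if ∀ i ∈ U, y i = x i then h y else 0) S x = marg h (S ∪ U) x := by
  simp only [marg, Finset.forall_mem_union, ite_and]

theorem marg_indicator (S U : Finset (Fin N)) (x : ∀ i, X i) :
    marg (fun y => if ∀ i ∈ U, y i = x i then (1 : ℝ) else 0) S x = marg 1 (S ∪ U) x :=
  marg_ite 1 S U x

omit [∀ i, Fintype (X i)] in
theorem dependsOn_indicator (U : Finset (Fin N)) (x : ∀ i, X i) :
    DependsOn (fun y => if ∀ i ∈ U, y i = x i then (1 : ℝ) else 0) (U : Set (Fin N)) :=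
  fun _ _ hyz => if_congr ⟨fun h i hi => (hyz i hi).symm.trans (h i hi),
    fun h i hi => (hyz i hi).trans (h i hi)⟩ rfl rfl

theorem marg_one_eq (S : Finset (Fin N)) (x y : ∀ i, X i) : marg 1 S x = marg 1 S y := by
  let e : (∀ i, X i) ≃ (∀ i, X i) := Equiv.piCongrRight fun i => Equiv.swap (x i) (y i)
  unfold marg
  rw [← e.sum_comp]
  refine Finset.sum_congr rfl fun _ _ => if_congr ?_ rfl rfl
  simp [e, Equiv.swap_apply_eq_iff]

theorem marg_marg (μ : (∀ i, X i) → ℝ) {S W : Finset (Fin N)} (hSW : S ⊆ W)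
    (x : ∀ i, X i) :
    marg (marg μ W) S x = marg μ S x * marg 1 W x := by
  have hcond : ∀ y z : ∀ i, X i, ((∀ i ∈ S, y i = x i) ∧ ∀ i ∈ W, z i = y i) ↔
      ((∀ i ∈ S, z i = x i) ∧ ∀ i ∈ W, y i = z i) := fun y z =>
    ⟨fun ⟨hy, hz⟩ => ⟨fun i hi => (hz i (hSW hi)).trans (hy i hi), fun i hi => (hz i hi).symm⟩,
     fun ⟨hz, hy⟩ => ⟨fun i hi => (hy i (hSW hi)).trans (hz i hi), fun i hi => (hy i hi).symm⟩⟩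
  calc marg (marg μ W) S x
      = ∑ z : ∀ i, X i, ∑ y : ∀ i, X i,
          if (∀ i ∈ S, y i = x i) ∧ ∀ i ∈ W, z i = y i then μ z else 0 := by
        simp only [marg, Finset.ite_sum_zero, ← ite_and]
        exact Finset.sum_comm
    _ = ∑ z, (if ∀ i ∈ S, z i = x i then μ z else 0) * marg 1 W z := by
        refine Finset.sum_congr rfl fun z _ => ?_
        rw [Finset.sum_congr rfl fun y _ => if_congr (hcond y z) rfl rfl]
        simp only [ite_and, marg, Finset.mul_sum]
        split_ifs <;> simp
    _ = marg μ S x * marg 1 W x := by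
        simp_rw [marg_one_eq W _ x, ← Finset.sum_mul]; rfl

theorem marg_mul_mul_marg_one {f g : (∀ i, X i) → ℝ} {P Q S : Finset (Fin N)}
    (hf : DependsOn f (P : Set (Fin N))) (hg : DependsOn g (Q : Set (Fin N))) (hPQ : P ∩ Q ⊆ S)
    (x : ∀ i, X i) : marg (f * g) S x * marg 1 S x = marg f S x * marg g S x := by
  -- Exchanging the `P`-coordinates of two realizations `y, z` that agree with `x` on `S`
  -- turns `f y * g z` into `f y' * g y'`, because `P ∩ Q ⊆ S`.
  let swapP : (∀ i, X i) × (∀ i, X i) → (∀ i, X i) × (∀ i, X i) := fun p =>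
    (fun i => if i ∈ P then p.1 i else p.2 i, fun i => if i ∈ P then p.2 i else p.1 i)
  have hinv : ∀ p, swapP (swapP p) = p := fun p => by
    ext i <;> by_cases hi : i ∈ P <;> simp [swapP, hi]
  let σ : (∀ i, X i) × (∀ i, X i) ≃ (∀ i, X i) × (∀ i, X i) :=
    ⟨swapP, swapP, hinv, hinv⟩
  simp only [marg, Finset.sum_mul_sum, ← Fintype.sum_prod_type', ite_zero_mul_ite_zero]
  rw [← σ.sum_comp]
  refine Finset.sum_congr rfl fun p _ => ?_
  have hS : ((∀ i ∈ S, (σ p).1 i = x i) ∧ ∀ i ∈ S, (σ p).2 i = x i) ↔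
      ((∀ i ∈ S, p.1 i = x i) ∧ ∀ i ∈ S, p.2 i = x i) := by
    simp only [σ, swapP, Equiv.coe_fn_mk, ← forall_and]
    refine forall₂_congr fun i _ => ?_
    by_cases hi : i ∈ P <;> simp [hi, and_comm]
  rw [if_congr hS rfl rfl]
  refine if_ctx_congr Iff.rfl (fun ⟨h₁, h₂⟩ => ?_) fun _ => rfl
  have hσf : f (σ p).1 = f p.1 := hf fun i hi => by simp [σ, swapP, Finset.mem_coe.1 hi]
  have hσg : g (σ p).1 = g p.2 := hg fun i hi => by
    by_cases hiP : i ∈ P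
    · simpa [σ, swapP, hiP] using (h₁ i (hPQ (Finset.mem_inter.2 ⟨hiP, hi⟩))).trans
        (h₂ i (hPQ (Finset.mem_inter.2 ⟨hiP, hi⟩))).symm
    · simp [σ, swapP, hiP]
  simp [hσf, hσg]

theorem marg_union_mul_marg_one {h : (∀ i, X i) → ℝ} {Q S T : Finset (Fin N)}
    (hh : DependsOn h (Q : Set (Fin N))) (hQT : Q ∩ T ⊆ S) (x : ∀ i, X i) :
    marg h (S ∪ T) x * marg 1 S x = marg h S x * marg 1 (S ∪ T) x := by
  have hQ : Q ∩ (S ∪ T) ⊆ S := by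
    rw [Finset.inter_union_distrib_left]
    exact Finset.union_subset Finset.inter_subset_right hQT
  have key := marg_mul_mul_marg_one hh (dependsOn_indicator (S ∪ T) x) hQ x
  have hmul : (h * fun y => if ∀ i ∈ S ∪ T, y i = x i then (1 : ℝ) else 0) =
      fun y => if ∀ i ∈ S ∪ T, y i = x i then h y else 0 := by
    ext y; simp
  rwa [hmul, marg_ite, marg_indicator, Finset.union_left_idem] at key

theorem sum_marg_insert_update (h : (∀ i, X i) → ℝ) {S : Finset (Fin N)} {j : Fin N}
    (hj : j ∉ S) (x : ∀ i, X i) :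
    ∑ v : X j, marg h (insert j S) (Function.update x j v) = marg h S x := by
  unfold marg
  rw [Finset.sum_comm]
  refine Finset.sum_congr rfl fun y _ => ?_
  have hiff : ∀ v, (∀ i ∈ insert j S, y i = Function.update x j v i) ↔
      (y j = v ∧ ∀ i ∈ S, y i = x i) := fun v => by
    rw [Finset.forall_mem_insert, Function.update_self]
    exact and_congr_right fun _ => forall₂_congr fun i hi => by
      rw [Function.update_of_ne (ne_of_mem_of_not_mem hi hj)]
  simp_rw [if_congr (hiff _) rfl rfl, ite_and, Finset.sum_ite_eq, Finset.mem_univ, if_true]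

theorem dependsOn_condP (μ : (∀ i, X i) → ℝ) (i : Fin N) (S : Finset (Fin N)) :
    DependsOn (condP μ i S) (insert i S : Finset (Fin N)) := fun x y hxy => by
  simp only [condP]
  rw [dependsOn_marg μ _ hxy,
    dependsOn_marg μ S fun k hk => hxy k (by simp [Finset.mem_coe.1 hk])]

theorem condP_pos {μ : (∀ i, X i) → ℝ} (hpos : ∀ x, 0 < μ x) (i : Fin N)
    (S : Finset (Fin N)) (x : ∀ i, X i) : 0 < condP μ i S x :=
  div_pos (marg_pos hpos _ x) (marg_pos hpos S x)

theorem sum_condP_update {μ : (∀ i, X i) → ℝ} (hpos : ∀ x, 0 < μ x) {S : Finset (Fin N)}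
    {j : Fin N} (hj : j ∉ S) (x : ∀ i, X i) :
    ∑ v : X j, condP μ j S (Function.update x j v) = 1 := by
  simp only [condP, (dependsOn_marg μ S).apply_update (Finset.mem_coe.not.2 hj),
    ← Finset.sum_div, sum_marg_insert_update μ hj]
  exact div_self (marg_pos hpos S x).ne'

theorem marg_eq_prod_condP {μ : (∀ i, X i) → ℝ} (hpos : ∀ x, 0 < μ x)
    {Pa : Fin N → Finset (Fin N)} (hacy : ∀ v, ¬ Relation.TransGen (fun k l => k ∈ Pa l) v v)
    (hfact : ∀ x, μ x = ∏ i, condP μ i (Pa i) x) {W : Finset (Fin N)}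
    (hW : ∀ i ∈ W, Pa i ⊆ W) (x : ∀ i, X i) :
    marg μ W x = ∏ i ∈ W, condP μ i (Pa i) x := by
  induction hU : Wᶜ using Finset.strongInduction generalizing W x with
  | H U ih =>
  rcases U.eq_empty_or_nonempty with rfl | hne
  · rw [(Finset.compl_eq_empty_iff W).1 hU, marg_univ]
    exact hfact x
  obtain ⟨j, hjU, hjmin⟩ := Finset.exists_mem_forall_rel_notMem_of_acyclic hacy hne
  have hjW : j ∉ W := Finset.mem_compl.1 (hU ▸ hjU)
  have hPaj : Pa j ⊆ W := fun p hp => by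
    by_contra hpW
    exact hjmin p hp (hU ▸ Finset.mem_compl.2 hpW)
  have hW' : ∀ i ∈ insert j W, Pa i ⊆ insert j W := by
    simp only [Finset.forall_mem_insert]
    exact ⟨hPaj.trans (Finset.subset_insert _ _),
      fun i hi => (hW i hi).trans (Finset.subset_insert _ _)⟩
  have hlt : (insert j W)ᶜ ⊂ U := by
    rw [Finset.compl_insert, hU]
    exact Finset.erase_ssubset hjU
  have hfam : ∀ i ∈ W, j ∉ (insert i (Pa i) : Finset (Fin N)) := fun i hi hj => by
    rcases Finset.mem_insert.1 hj with rfl | hj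
    exacts [hjW hi, hjW (hW i hi hj)]
  rw [← sum_marg_insert_update μ hjW x]
  simp_rw [ih _ hlt hW' _ rfl, Finset.prod_insert hjW]
  rw [Finset.sum_congr rfl fun v _ => by
    rw [Finset.prod_congr rfl fun i hi =>
      (dependsOn_condP μ i (Pa i)).apply_update (Finset.mem_coe.not.2 (hfam i hi)) x v]]
  rw [← Finset.sum_mul, sum_condP_update hpos (fun h => hacy j (.single h)), one_mul]

theorem CI.of_marg {μ : (∀ i, X i) → ℝ} {A B K W : Finset (Fin N)} (hW : A ∪ B ∪ K ⊆ W)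
    (h : CI (marg μ W) A B K) : CI μ A B K := fun x => by
  have hc : marg 1 W x ≠ 0 := (marg_pos (fun _ => one_pos) W x).ne'
  have := h x
  rwa [marg_marg μ hW,
    marg_marg μ ((Finset.union_subset_union Finset.subset_union_right subset_rfl).trans hW),
    marg_marg μ ((Finset.union_subset_union Finset.subset_union_left subset_rfl).trans hW),
    marg_marg μ (Finset.subset_union_right.trans hW), mul_div_mul_right _ _ hc,
    mul_div_mul_right _ _ hc] at this

theorem CI.of_eq_mul {ν f g : (∀ i, X i) → ℝ} {A B K P Q : Finset (Fin N)} (hν : ν = f * g)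
    (hf : DependsOn f (P : Set (Fin N))) (hg : DependsOn g (Q : Set (Fin N)))
    (hf0 : ∀ y, 0 < f y) (hg0 : ∀ y, 0 < g y) (hPQ : P ∩ Q ⊆ K)
    (hAP : Disjoint A P) (hBQ : Disjoint B Q) (hAB : Disjoint A B) : CI ν A B K := fun x => by
  have hn : ∀ S, marg 1 S x ≠ 0 := fun S => (marg_pos (fun _ => one_pos) S x).ne'
  have hν' : ∀ S, K ⊆ S → marg ν S x = marg f S x * marg g S x / marg 1 S x :=
    fun S hS => by
      rw [eq_div_iff (hn S), hν]
      exact marg_mul_mul_marg_one hf hg (hPQ.trans hS) x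
  have hfA : ∀ S, marg f (S ∪ A) x = marg f S x * marg 1 (S ∪ A) x / marg 1 S x := fun S => by
    rw [eq_div_iff (hn S)]
    exact marg_union_mul_marg_one hf
      (by rw [Finset.disjoint_iff_inter_eq_empty.1 hAP.symm]; exact Finset.empty_subset _) x
  have hgB : ∀ S, marg g (S ∪ B) x = marg g S x * marg 1 (S ∪ B) x / marg 1 S x := fun S => by
    rw [eq_div_iff (hn S)]
    exact marg_union_mul_marg_one hg
      (by rw [Finset.disjoint_iff_inter_eq_empty.1 hBQ.symm]; exact Finset.empty_subset _) x
  -- `A ⊥ B | K` under the counting measure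
  have hunif : marg 1 (K ∪ A ∪ B) x * marg 1 K x = marg 1 (K ∪ A) x * marg 1 (K ∪ B) x := by
    have key := marg_union_mul_marg_one (S := K) (dependsOn_indicator A x)
      (by rw [Finset.disjoint_iff_inter_eq_empty.1 hAB]; exact Finset.empty_subset _) x
    rwa [marg_indicator, marg_indicator, Finset.union_right_comm] at key
  have hf0' := fun S => (marg_pos hf0 S x).ne'
  have hg0' := fun S => (marg_pos hg0 S x).ne'
  rw [show A ∪ B ∪ K = K ∪ B ∪ A by rw [Finset.union_comm, ← Finset.union_assoc,
    Finset.union_right_comm], Finset.union_comm B, Finset.union_comm A]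
  rw [hν' _ (by simp [Finset.union_assoc]), hν' _ Finset.subset_union_left,
    hν' _ Finset.subset_union_left, hν' _ subset_rfl, hfA, hfA, hgB K,
    show K ∪ B ∪ A = K ∪ A ∪ B from Finset.union_right_comm _ _ _, hgB]
  field_simp
  rw [div_eq_div_iff (by simp [hn, hf0', hg0']) (by simp [hn, hf0', hg0'])]
  linear_combination (marg f (K ∪ B) x * marg g (K ∪ A) x * marg g K x * marg f K x *
    marg 1 (K ∪ A) x * marg 1 K x) * hunif

theorem CI.of_separating_families {μ : (∀ i, X i) → ℝ} (hpos : ∀ x, 0 < μ x)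
    {Pa : Fin N → Finset (Fin N)} (hacy : ∀ v, ¬ TransGen (fun k l => k ∈ Pa l) v v)
    (hfact : ∀ x, μ x = ∏ i, condP μ i (Pa i) x) {A B K W T : Finset (Fin N)}
    (hW : ∀ i ∈ W, Pa i ⊆ W) (hABK : A ∪ B ∪ K ⊆ W) (hBT : B ⊆ T) (hAT : Disjoint A T)
    (hAK : Disjoint A K)
    (hfam : ∀ i ∈ W, ∀ u ∈ insert i (Pa i), u ∈ T → insert i (Pa i) ⊆ T ∪ K) :
    CI μ A B K := by
  let p : Fin N → Prop := fun i => insert i (Pa i) ⊆ T ∪ K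
  refine CI.of_marg hABK (CI.of_eq_mul (P := T ∪ K) (Q := W \ T)
    (f := fun y => ∏ i ∈ W.filter p, condP μ i (Pa i) y)
    (g := fun y => ∏ i ∈ W.filter (¬ p ·), condP μ i (Pa i) y) ?_ ?_ ?_
    (fun y => Finset.prod_pos fun i _ => condP_pos hpos i _ y)
    (fun y => Finset.prod_pos fun i _ => condP_pos hpos i _ y) ?_
    (Finset.disjoint_union_right.2 ⟨hAT, hAK⟩) ?_ (hAT.mono_right hBT))
  · ext y
    rw [marg_eq_prod_condP hpos hacy hfact hW]
    exact (Finset.prod_filter_mul_prod_filter_not W p _).symm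
  · exact fun x y hxy => Finset.prod_congr rfl fun i hi =>
      (dependsOn_condP μ i (Pa i)).mono (Finset.coe_subset.2 (Finset.mem_filter.1 hi).2) hxy
  · refine fun x y hxy => Finset.prod_congr rfl fun i hi =>
      (dependsOn_condP μ i (Pa i)).mono ?_ hxy
    obtain ⟨hiW, hip⟩ := Finset.mem_filter.1 hi
    exact fun u hu => Finset.mem_sdiff.2 ⟨Finset.insert_subset hiW (hW i hiW) hu,
      fun huT => hip (hfam i hiW u hu huT)⟩
  · intro v hv
    simp only [Finset.mem_inter, Finset.mem_union, Finset.mem_sdiff] at hv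
    tauto
  · exact Finset.disjoint_left.2 fun b hb hbWT => (Finset.mem_sdiff.1 hbWT).2 (hBT hb)

end Marginals

theorem stmt14_general {N : ℕ} {X : Fin N → Type*} [∀ i, Fintype (X i)]
    (μ : (∀ i, X i) → ℝ) (hpos : ∀ x, 0 < μ x)
    (Pa : Fin N → Finset (Fin N))
    (hacyclic : ∀ v : Fin N, ¬ Relation.TransGen (fun k l => k ∈ Pa l) v v)
    (hfact : ∀ x, μ x = ∏ i : Fin N, condP μ i (Pa i) x)
    (A B K : Finset (Fin N))
    (hAK : Disjoint A K) (hBK : Disjoint B K)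
    (hsep : DSep (fun k l => k ∈ Pa l) (↑A) (↑B) (↑K)) :
    CI μ A B K := by
  let W := Finset.univ.filter fun c =>
    ∃ z ∈ (↑A ∪ ↑B ∪ ↑K : Set (Fin N)), ReflTransGen (fun k l => k ∈ Pa l) c z
  have hABK : A ∪ B ∪ K ⊆ W := fun c hc =>
    Finset.mem_filter.2 ⟨Finset.mem_univ c, c, by simpa [or_assoc] using hc, .refl⟩
  have hW : ∀ i ∈ W, Pa i ⊆ W := fun i hi p hp => by
    obtain ⟨z, hz, hiz⟩ := (Finset.mem_filter.1 hi).2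
    exact Finset.mem_filter.2 ⟨Finset.mem_univ p, z, hz, .head hp hiz⟩
  obtain ⟨T, hBT, hAT, hT⟩ := DAG.exists_separator_of_dSep hacyclic hsep
    (Finset.disjoint_coe.2 hBK) (fun b hb => hABK (by simp [Finset.mem_coe.1 hb]))
    (fun c hc => (Finset.mem_filter.1 hc).2)
  refine CI.of_separating_families hpos hacyclic hfact hW hABK (Finset.coe_subset.1 hBT)
    (Finset.disjoint_coe.1 hAT) hAK fun i hi u hu huT v hv => ?_
  rw [Finset.mem_union, or_iff_not_imp_right]
  exact hT i hi u v (Finset.mem_insert.1 hu) (Finset.mem_insert.1 hv) huT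
    (Finset.insert_subset hi (hW i hi) hv)

/-- global Markov property, soundness: if the strictly positive `μ`
factorizes minimally according to the DAG with parents `Pa`, then for pairwise
disjoint coordinate sets `A`, `B`, `K`, d-separation of `A` from `B` by `K` implies
conditional independence of `A` and `B` given `K` under `μ`. -/
theorem stmt14 {N : ℕ} {X : Fin N → Type*} [∀ i, Fintype (X i)] [∀ i, Nonempty (X i)]
    (μ : (∀ i, X i) → ℝ) (hpos : ∀ x, 0 < μ x) (hsum : ∑ x, μ x = 1)
    (Pa : Fin N → Finset (Fin N))
    (hacyclic : ∀ v : Fin N, ¬ Relation.TransGen (fun k l => k ∈ Pa l) v v)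
    (hfact : ∀ x, μ x = ∏ i : Fin N, condP μ i (Pa i) x)
    (hmin : ∀ T : Fin N → Finset (Fin N), (∀ i, T i ⊆ Pa i) →
      (∀ x, μ x = ∏ i : Fin N, condP μ i (T i) x) → T = Pa)
    (A B K : Finset (Fin N))
    (hAB : Disjoint A B) (hAK : Disjoint A K) (hBK : Disjoint B K)
    (hsep : DSep (fun k l => k ∈ Pa l) (↑A) (↑B) (↑K)) :
    CI μ A B K :=
  stmt14_general μ hpos Pa hacyclic hfact A B K hAK hBK hsep
end

section
/- Let G be a DAG on finite vertex set V, i ∈ V, and J* ⊆ Pa(i). Form G' from G by deleting all outgoing edges of vertices in J* (and all incoming edges of some disjoint intervened set). Then Pa(i) \ J* blocks every undirected path from i to any j ∈ J* in G': each such path either starts at i via a parent in Pa(i) \ J* (a non-collider in the blocking set) or contains a collider w that is a descendant of i, and no descendant of i lies in Pa(i) \ J* by acyclicity. -/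
section Paths

variable {V : Type*} {E : V → V → Prop}

lemma not_colliderAt_zero {a b : V} (l : List V) (hab : ¬ E a b) :
    ¬ ColliderAt E (a :: b :: l) 0 := by
  rintro ⟨a', w, -, ha, hw, -, hE, -⟩
  cases ha
  cases hw
  exact hab hE

/-- The collider is the head of the first backward edge. -/
lemma isChain_or_exists_colliderAt_of_rel (a b : V) (l : List V)
    (hl : (a :: b :: l).IsChain (fun x y => E x y ∨ E y x)) (hab : E a b) :
    (a :: b :: l).IsChain E ∨
      ∃ t w, (a :: b :: l)[t + 1]? = some w ∧ ColliderAt E (a :: b :: l) t ∧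
        Relation.TransGen E a w := by
  induction l generalizing a b with
  | nil => exact .inl (List.isChain_pair.mpr hab)
  | cons c l ih =>
    rcases List.isChain_cons_cons.mp hl with ⟨-, hbl⟩
    rcases hbl.rel with hbc | hcb
    · rcases ih b c hbl hbc with hdir | ⟨t, w, hw, hcol, hbw⟩
      · exact .inl (hdir.cons_cons hab)
      · exact .inr ⟨t + 1, w, hw, hcol, hbw.head hab⟩
    · exact .inr ⟨0, b, rfl, ⟨a, b, c, rfl, rfl, rfl, hab, hcb⟩, .single hab⟩

end Paths

theorem stmt16_general {V : Type*} (E : V → V → Prop)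
    (acyclic : ∀ v : V, ¬ Relation.TransGen E v v) (i : V)
    (Jstar R : Set V) (hJ : ∀ u ∈ Jstar, E u i) :
    DSep (fun u v => E u v ∧ u ∉ Jstar ∧ v ∉ R)
      {i} Jstar ({u | E u i} \ Jstar) := by
  set E' : V → V → Prop := fun u v => E u v ∧ u ∉ Jstar ∧ v ∉ R
  have hE' : E' ≤ E := fun _ _ h => h.1
  intro u hu
  rw [Set.mem_singleton_iff.mp hu]
  rintro j hj l ⟨-, hhead, hlast, hchain⟩
  obtain ⟨b, rest, rfl⟩ : ∃ b rest, l = i :: b :: rest := by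
    match l, hhead, hlast with
    | [_], rfl, rfl => exact absurd (.single (hJ _ hj)) (acyclic _)
    | _ :: b :: rest, rfl, _ => exact ⟨b, rest, rfl⟩
  rcases hchain.rel with hib | hbi
  · rcases isChain_or_exists_colliderAt_of_rel i b rest hchain hib with
      hdir | ⟨t, w, hw, hcol, hiw⟩
    · have hij : Relation.ReflTransGen E' i j :=
        List.relationReflTransGen_of_exists_isChain_cons _ hdir
          (Option.some_injective _ ((List.getLast?_eq_some_getLast _).symm.trans hlast))
      exact absurd (.tail' (Relation.ReflTransGen.mono hE' _ _ hij) (hJ j hj)) (acyclic i)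
    · have hiw' : Relation.TransGen E i w := Relation.TransGen.mono hE' _ _ hiw
      refine .inr ⟨t, w, hw, hcol, fun hwi => acyclic i (hiw'.tail hwi.1), fun d hwd hdi => ?_⟩
      exact acyclic i ((hiw'.trans (Relation.TransGen.mono hE' _ _ hwd)).tail hdi.1)
  · have hbj : b ≠ j := fun h => hbi.2.1 (h ▸ hj)
    have hlen : 0 + 2 < (i :: b :: rest).length := by
      rcases rest with _ | ⟨c, rest⟩
      · exact absurd (Option.some_injective _ hlast) hbj
      · simp
    refine .inl ⟨0, b, rfl, hlen, not_colliderAt_zero rest fun hib => ?_, hbi.1, hbi.2.1⟩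
    exact acyclic i (.tail (.single hib.1) hbi.1)

/-- let `J* ⊆ Pa i` and form `G'` from the DAG `G` by deleting all
outgoing edges of vertices in `J*` and all incoming edges of a disjoint intervened set
`R`.  Then `Pa i \ J*` blocks every undirected path from `i` to any `j ∈ J*` in `G'`,
i.e. `Pa i \ J*` d-separates `{i}` from `J*` in `G'`. -/
theorem stmt16 {V : Type*} [Finite V] (E : V → V → Prop)
    (acyclic : ∀ v : V, ¬ Relation.TransGen E v v) (i : V)
    (Jstar R : Set V) (hJ : ∀ u ∈ Jstar, E u i)
    (hJR : Disjoint Jstar R) (hiR : i ∉ R) :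
    DSep (fun u v => E u v ∧ u ∉ Jstar ∧ v ∉ R)
      {i} Jstar ({u | E u i} \ Jstar) :=
  stmt16_general E acyclic i Jstar R hJ
end
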